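/- arXiv:2605.21911 — 6 statements merged into one kernel-verified Lean document; each statement's English description precedes it below -/
import Mathlib

section
/- Let θ, ω ≥ 0, λ ∈ ℝ with 2ω ≠ λ, g₀ > 0, and T > 0. Define D(t) = (2θg₀ + 2ω − λ)e^{(2ω−λ)t} − 2θg₀ and assume D(t) ≠ 0 for all t ∈ [0,T]. Define g(t) = g₀(2ω − λ)/D(t) and f(t) = θ g(t) + ω. Then g(0) = g₀, and for every t ∈ [0,T], g′(t) = −(2f(t) − λ)·g(t) = −(2θ g(t) + 2ω − λ)·g(t). -/
/-!
With `k = 2ω - λ` and `β = 2θ`, the ODE `g' = -(β g + k) g` is a logistic (Bernoulli) equation: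
`1/g` satisfies the linear equation `(1/g)' = k (1/g) + β`, whose solution with `1/g(0) = 1/g₀` is
`D(t) / (g₀ k)`. Differentiating `g = g₀ k / D` directly and using `D' = k (D + β g₀)` gives the claim.
-/

open Real

theorem hasDerivAt_logisticDenom (β k g₀ t : ℝ) :
    HasDerivAt (fun s => (β * g₀ + k) * exp (k * s) - β * g₀)
      (k * ((β * g₀ + k) * exp (k * t))) t := by
  have hexp : HasDerivAt (fun s => exp (k * s)) (exp (k * t) * k) t := by
    simpa using ((hasDerivAt_id t).const_mul k).exp
  exact ((hexp.const_mul (β * g₀ + k)).sub_const (β * g₀)).congr_deriv (by ring)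

section LogisticClosedForm

variable {β k g₀ : ℝ} {D g : ℝ → ℝ}

theorem logistic_closedForm_apply_zero (hk : k ≠ 0)
    (hD : ∀ s, D s = (β * g₀ + k) * exp (k * s) - β * g₀) (hg : ∀ s, g s = g₀ * k / D s) :
    g 0 = g₀ := by
  rw [hg, hD, mul_zero, exp_zero, mul_one, add_sub_cancel_left, mul_div_assoc, div_self hk,
    mul_one]

theorem logistic_closedForm_hasDerivAt {t : ℝ}
    (hD : ∀ s, D s = (β * g₀ + k) * exp (k * s) - β * g₀) (hg : ∀ s, g s = g₀ * k / D s)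
    (hDt : D t ≠ 0) :
    HasDerivAt g (-(β * g t + k) * g t) t := by
  have hDderiv : HasDerivAt D (k * (D t + β * g₀)) t := by
    rw [hD t, sub_add_cancel, funext hD]
    exact hasDerivAt_logisticDenom β k g₀ t
  rw [hg t, funext hg]
  exact ((hasDerivAt_const t (g₀ * k)).div hDderiv hDt).congr_deriv (by field_simp; ring)

end LogisticClosedForm

theorem stmt1_general (θ ω lam g₀ T : ℝ) (hne : 2 * ω ≠ lam)
    (D g f : ℝ → ℝ)
    (hD : ∀ t, D t = (2 * θ * g₀ + 2 * ω - lam) * Real.exp ((2 * ω - lam) * t) - 2 * θ * g₀)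
    (hDne : ∀ t ∈ Set.Icc (0:ℝ) T, D t ≠ 0)
    (hg : ∀ t, g t = g₀ * (2 * ω - lam) / D t)
    (hf : ∀ t, f t = θ * g t + ω) :
    g 0 = g₀ ∧ ∀ t ∈ Set.Icc (0:ℝ) T,
      HasDerivAt g (-(2 * f t - lam) * g t) t ∧
        -(2 * f t - lam) * g t = -(2 * θ * g t + 2 * ω - lam) * g t := by
  have hD_logistic : ∀ t, D t = ((2 * θ) * g₀ + (2 * ω - lam)) * exp ((2 * ω - lam) * t)
      - (2 * θ) * g₀ := fun t => by rw [hD]; ring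
  have hf_logistic : ∀ t, -(2 * f t - lam) * g t = -(2 * θ * g t + (2 * ω - lam)) * g t := fun t => by
    rw [hf]; ring
  refine ⟨logistic_closedForm_apply_zero (sub_ne_zero.mpr hne) hD_logistic hg, fun t ht => ⟨?_, ?_⟩⟩
  · rw [hf_logistic]
    exact logistic_closedForm_hasDerivAt hD_logistic hg (hDne t ht)
  · rw [hf_logistic]; ring

/-- Closed-form affine-coupled schedule (case `2ω ≠ λ`): with
`D t = (2θg₀ + 2ω - λ) e^{(2ω-λ)t} - 2θg₀` nonvanishing on `[0,T]`,
`g t = g₀ (2ω - λ) / D t` and `f t = θ g t + ω`, one has `g 0 = g₀` and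
`g' t = -(2 f t - λ) g t = -(2θ g t + 2ω - λ) g t` on `[0,T]`. -/
theorem stmt1 (θ ω lam g₀ T : ℝ) (hθ : 0 ≤ θ) (hω : 0 ≤ ω) (hne : 2 * ω ≠ lam)
    (hg₀ : 0 < g₀) (hT : 0 < T)
    (D g f : ℝ → ℝ)
    (hD : ∀ t, D t = (2 * θ * g₀ + 2 * ω - lam) * Real.exp ((2 * ω - lam) * t) - 2 * θ * g₀)
    (hDne : ∀ t ∈ Set.Icc (0:ℝ) T, D t ≠ 0)
    (hg : ∀ t, g t = g₀ * (2 * ω - lam) / D t)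
    (hf : ∀ t, f t = θ * g t + ω) :
    g 0 = g₀ ∧ ∀ t ∈ Set.Icc (0:ℝ) T,
      HasDerivAt g (-(2 * f t - lam) * g t) t ∧
        -(2 * f t - lam) * g t = -(2 * θ * g t + 2 * ω - lam) * g t :=
  stmt1_general θ ω lam g₀ T hne D g f hD hDne hg hf
end

section
/- Let E > 0, θ > 0, ω ∈ [0, E), and c ≥ 2E. Set g₀ = ((2ω − c)/(2θ)) · (e^{2(E−ω)} − 1)/(1 − e^{−(2ω−c)}), and define g(t) = g₀(2ω − c)/((2θ g₀ + 2ω − c)e^{(2ω−c)t} − 2θ g₀) and f(t) = θ g(t) + ω for t ∈ [0,1]. Then: (i) g₀ > 0; (ii) g(t) > 0 for all t ∈ [0,1]; (iii) g′(t) ≥ 0 for all t ∈ [0,1]; and (iv) ∫₀¹ f(t) dt = E. -/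
open Real

/-!
Write `a = 2ω - c < 0` and `K = 2θg₀`. The schedule is `g = g₀ a / D` with
`D t = (K + a) e^{a t} - K`, and the choice of `g₀` is exactly what makes `K + a ≤ 0`
(this is where `c ≥ 2E` enters) and `D 1 = a e^{2(E - ω)} e^{a}`. Then `D ≤ -K < 0`, so
`g > 0`, and `D' = a (D + K)` has the sign of `-a`, so `g` is nondecreasing. The same identity shows
that `f = θ g + ω = a K / (2D) + ω` has the antiderivative `log (-D) / 2 + (ω - a/2) t`, whose
increment over `[0, 1]` is `(2(E - ω) + a) / 2 + ω - a / 2 = E`.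
-/

/-- The denominator of the closed-form solution `g₀ a / D` of the logistic equation
`g' = -(a + K g) g`, `g 0 = g₀`. -/
noncomputable def logisticDenom (a K t : ℝ) : ℝ := (K + a) * exp (a * t) - K

section

variable {a K : ℝ}

@[simp]
lemma logisticDenom_zero : logisticDenom a K 0 = a := by
  simp [logisticDenom]

lemma logisticDenom_add_eq (t : ℝ) : logisticDenom a K t + K = (K + a) * exp (a * t) := by
  simp [logisticDenom]

lemma logisticDenom_add_nonpos (hKa : K + a ≤ 0) (t : ℝ) : logisticDenom a K t + K ≤ 0 := by
  rw [logisticDenom_add_eq]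
  exact mul_nonpos_of_nonpos_of_nonneg hKa (exp_pos _).le

lemma logisticDenom_neg (hK : 0 < K) (hKa : K + a ≤ 0) (t : ℝ) : logisticDenom a K t < 0 := by
  linarith [logisticDenom_add_nonpos hKa t]

@[fun_prop]
lemma continuous_logisticDenom : Continuous (logisticDenom a K) := by
  unfold logisticDenom
  fun_prop

lemma hasDerivAt_logisticDenom_s3 (t : ℝ) :
    HasDerivAt (logisticDenom a K) (a * (logisticDenom a K t + K)) t := by
  rw [logisticDenom_add_eq]
  exact ((((hasDerivAt_id t).const_mul a).exp.const_mul (K + a)).sub_const K).congr_deriv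
    (by simp only [id]; ring)

lemma hasDerivAt_const_div_logisticDenom (b : ℝ) {t : ℝ} (ht : logisticDenom a K t ≠ 0) :
    HasDerivAt (fun s ↦ b / logisticDenom a K s)
      (-(b * a * (logisticDenom a K t + K)) / logisticDenom a K t ^ 2) t :=
  ((hasDerivAt_const t b).div (hasDerivAt_logisticDenom_s3 t) ht).congr_deriv (by ring)

lemma deriv_const_div_logisticDenom_nonneg {b : ℝ} (hb : 0 ≤ b * a) (hK : 0 < K)
    (hKa : K + a ≤ 0) (t : ℝ) :
    0 ≤ deriv (fun s ↦ b / logisticDenom a K s) t := by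
  rw [(hasDerivAt_const_div_logisticDenom b (logisticDenom_neg hK hKa t).ne).deriv]
  exact div_nonneg (neg_nonneg.mpr (mul_nonpos_of_nonneg_of_nonpos hb
    (logisticDenom_add_nonpos hKa t))) (sq_nonneg _)

lemma hasDerivAt_log_neg_logisticDenom {t : ℝ} (ht : logisticDenom a K t < 0) :
    HasDerivAt (fun s ↦ log (-logisticDenom a K s) / 2)
      (a * K / (2 * logisticDenom a K t) + a / 2) t := by
  have hlog := (hasDerivAt_logisticDenom_s3 t).neg.log (neg_pos.mpr ht).ne'
  refine (hlog.div_const 2).congr_deriv ?_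
  simp only [Pi.neg_apply]
  field_simp [ht.ne]
  ring

lemma integral_div_logisticDenom_add (hK : 0 < K) (hKa : K + a ≤ 0) (ω : ℝ) :
    ∫ t in (0 : ℝ)..1, (a * K / (2 * logisticDenom a K t) + ω) =
      (log (-logisticDenom a K 1) - log (-a)) / 2 + ω - a / 2 := by
  have hD := logisticDenom_neg hK hKa
  have hF (t : ℝ) : HasDerivAt (fun s ↦ log (-logisticDenom a K s) / 2 + (ω - a / 2) * s)
      (a * K / (2 * logisticDenom a K t) + ω) t :=
    ((hasDerivAt_log_neg_logisticDenom (hD t)).add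
      ((hasDerivAt_id t).const_mul (ω - a / 2))).congr_deriv (by ring)
  have hcont : Continuous fun t ↦ a * K / (2 * logisticDenom a K t) + ω := by
    refine (continuous_const.div (by fun_prop) fun t ↦ ?_).add continuous_const
    exact mul_ne_zero two_ne_zero (hD t).ne
  rw [intervalIntegral.integral_eq_sub_of_hasDerivAt (fun t _ ↦ hF t)
    (hcont.intervalIntegrable 0 1)]
  simp only [logisticDenom_zero, mul_zero, mul_one, add_zero]
  ring

lemma logisticDenom_one_of_mul_one_sub_exp {u : ℝ} (hK : K * (1 - exp (-a)) = a * (u - 1)) :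
    logisticDenom a K 1 = a * u * exp a := by
  have hexp : exp (-a) * exp a = 1 := by rw [← exp_add]; simp
  rw [logisticDenom, mul_one]
  linear_combination exp a * hK + K * hexp

end

lemma pos_and_add_nonpos_of_mul_one_sub_exp {a u K : ℝ} (ha : a < 0) (hu : 1 < u)
    (huv : u ≤ exp (-a)) (hK : K * (1 - exp (-a)) = a * (u - 1)) : 0 < K ∧ K + a ≤ 0 := by
  have hv : 1 < exp (-a) := one_lt_exp_iff.mpr (by linarith)
  constructor
  · nlinarith
  · nlinarith

theorem stmt3_general (E θ ω c : ℝ) (hθ : 0 < θ) (hωE : ω < E)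
    (hc : 2 * E ≤ c)
    (g₀ : ℝ)
    (hg₀def : g₀ = ((2 * ω - c) / (2 * θ)) *
      (Real.exp (2 * (E - ω)) - 1) / (1 - Real.exp (-(2 * ω - c))))
    (g f : ℝ → ℝ)
    (hg : ∀ t, g t = g₀ * (2 * ω - c) /
      ((2 * θ * g₀ + 2 * ω - c) * Real.exp ((2 * ω - c) * t) - 2 * θ * g₀))
    (hf : ∀ t, f t = θ * g t + ω) :
    0 < g₀ ∧
    (∀ t ∈ Set.Icc (0:ℝ) 1, 0 < g t) ∧
    (∀ t ∈ Set.Icc (0:ℝ) 1, 0 ≤ deriv g t) ∧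
    (∫ t in (0:ℝ)..1, f t) = E := by
  set a := 2 * ω - c
  set K := 2 * θ * g₀ with hK_def
  set u := exp (2 * (E - ω))
  have ha : a < 0 := by linarith
  have hu : 1 < u := one_lt_exp_iff.mpr (by linarith)
  have hv : 1 < exp (-a) := one_lt_exp_iff.mpr (by linarith)
  have hKu : K * (1 - exp (-a)) = a * (u - 1) := by
    rw [hK_def, hg₀def]
    field_simp [(by linarith : 1 - exp (-a) ≠ 0)]
  obtain ⟨hK, hKa⟩ := pos_and_add_nonpos_of_mul_one_sub_exp ha hu
    (exp_le_exp.mpr (by linarith)) hKu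
  have hg₀ : 0 < g₀ := pos_of_mul_pos_right hK (by positivity)
  have hg_eq : g = fun t ↦ g₀ * a / logisticDenom a K t := by
    funext t
    rw [hg, logisticDenom, show 2 * θ * g₀ + 2 * ω - c = K + a by ring]
  have hf_eq : f = fun t ↦ a * K / (2 * logisticDenom a K t) + ω := by
    funext t
    rw [hf, hg_eq, hK_def]
    field_simp
  refine ⟨hg₀, fun t _ ↦ ?_, fun t _ ↦ ?_, ?_⟩
  · rw [hg_eq]
    exact div_pos_of_neg_of_neg (mul_neg_of_pos_of_neg hg₀ ha) (logisticDenom_neg hK hKa t)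
  · rw [hg_eq]
    exact deriv_const_div_logisticDenom_nonneg
      (by rw [mul_assoc]; exact mul_nonneg hg₀.le (mul_self_nonneg a)) hK hKa t
  · rw [hf_eq, integral_div_logisticDenom_add hK hKa,
      logisticDenom_one_of_mul_one_sub_exp hKu,
      show -(a * u * exp a) = -a * (u * exp a) by ring,
      log_mul (by linarith) (by positivity), log_mul (by linarith) (exp_ne_zero a), log_exp,
      log_exp]
    ring

/-- ACS hyperparameter constraints: for `E > 0`, `θ > 0`, `ω ∈ [0, E)`, `c ≥ 2E`, and the
prescribed `g₀`, the closed-form schedule `g` is positive and nondecreasing on `[0,1]`,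
and the coupled `f = θ g + ω` has terminal energy `∫₀¹ f = E`. -/
theorem stmt3 (E θ ω c : ℝ) (hE : 0 < E) (hθ : 0 < θ) (hω : 0 ≤ ω) (hωE : ω < E)
    (hc : 2 * E ≤ c)
    (g₀ : ℝ)
    (hg₀def : g₀ = ((2 * ω - c) / (2 * θ)) *
      (Real.exp (2 * (E - ω)) - 1) / (1 - Real.exp (-(2 * ω - c))))
    (g f : ℝ → ℝ)
    (hg : ∀ t, g t = g₀ * (2 * ω - c) /
      ((2 * θ * g₀ + 2 * ω - c) * Real.exp ((2 * ω - c) * t) - 2 * θ * g₀))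
    (hf : ∀ t, f t = θ * g t + ω) :
    0 < g₀ ∧
    (∀ t ∈ Set.Icc (0:ℝ) 1, 0 < g t) ∧
    (∀ t ∈ Set.Icc (0:ℝ) 1, 0 ≤ deriv g t) ∧
    (∫ t in (0:ℝ)..1, f t) = E :=
  stmt3_general E θ ω c hθ hωE hc g₀ hg₀def g f hg hf
end

section
/- Let d > 0 and T > 0, and let J, g : [0,T] → ℝ be continuously differentiable with J(t) ≥ 0 and g(t) > 0 for all t ∈ [0,T]. Suppose that for all t ∈ [0,T], (1/d)·(g(t)J(t))² ≤ g(t)²J(t) − g(t)J′(t). Then ∫₀ᵀ (g(t)J(t))² dt ≤ d·g(0)J(0) + d·∫₀ᵀ J(t)(g(t)² + g′(t)) dt. -/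
/-!
Since `g²J - gJ' = J (g² + g') - (gJ)'`, multiplying the hypothesis by `d` and integrating over
`[0, T]` gives `∫ (gJ)² ≤ d ∫ J (g² + g') - d (g(T)J(T) - g(0)J(0))` by the fundamental theorem
of calculus, and the boundary term `d g(T) J(T)` is nonnegative.
-/

open MeasureTheory Set intervalIntegral

theorem integral_le_sub_add_integral_of_le_sub_deriv {a b : ℝ} (hab : a ≤ b)
    {f h u u' : ℝ → ℝ} (hu : ∀ t ∈ Icc a b, HasDerivAt u (u' t) t)
    (hf : IntervalIntegrable f volume a b) (hh : IntervalIntegrable h volume a b)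
    (hu' : IntervalIntegrable u' volume a b) (hle : ∀ t ∈ Icc a b, f t ≤ h t - u' t) :
    ∫ t in a..b, f t ≤ u a - u b + ∫ t in a..b, h t := by
  have hftc : ∫ t in a..b, u' t = u b - u a :=
    integral_eq_sub_of_hasDerivAt (by rwa [uIcc_of_le hab]) hu'
  calc ∫ t in a..b, f t
      ≤ ∫ t in a..b, (h t - u' t) := integral_mono_on hab hf (hh.sub hu') hle
    _ = u a - u b + ∫ t in a..b, h t := by rw [integral_sub hh hu', hftc]; ring

/-- Master integration-by-parts bound: if `(1/d)(gJ)² ≤ g²J - gJ'` pointwise on `[0,T]`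
with `J ≥ 0`, `g > 0` and `J, g` continuously differentiable, then
`∫₀ᵀ (gJ)² ≤ d g(0) J(0) + d ∫₀ᵀ J (g² + g')`. -/
theorem stmt5 (d T : ℝ) (hd : 0 < d) (hT : 0 < T)
    (J J' g g' : ℝ → ℝ)
    (hJd : ∀ t ∈ Set.Icc (0:ℝ) T, HasDerivAt J (J' t) t)
    (hJ'c : ContinuousOn J' (Set.Icc 0 T))
    (hgd : ∀ t ∈ Set.Icc (0:ℝ) T, HasDerivAt g (g' t) t)
    (hg'c : ContinuousOn g' (Set.Icc 0 T))
    (hJ : ∀ t ∈ Set.Icc (0:ℝ) T, 0 ≤ J t)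
    (hg : ∀ t ∈ Set.Icc (0:ℝ) T, 0 < g t)
    (hineq : ∀ t ∈ Set.Icc (0:ℝ) T,
      (1 / d) * (g t * J t) ^ 2 ≤ (g t) ^ 2 * J t - g t * J' t) :
    (∫ t in (0:ℝ)..T, (g t * J t) ^ 2) ≤
      d * g 0 * J 0 + d * ∫ t in (0:ℝ)..T, J t * ((g t) ^ 2 + g' t) := by
  have hJc : ContinuousOn J (Icc 0 T) := HasDerivAt.continuousOn hJd
  have hgc : ContinuousOn g (Icc 0 T) := HasDerivAt.continuousOn hgd
  have hderiv : ∀ t ∈ Icc 0 T,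
      HasDerivAt (fun t ↦ d * (g t * J t)) (d * (g' t * J t + g t * J' t)) t :=
    fun t ht ↦ ((hgd t ht).mul (hJd t ht)).const_mul d
  have hpointwise : ∀ t ∈ Icc 0 T, (g t * J t) ^ 2 ≤
      d * (J t * (g t ^ 2 + g' t)) - d * (g' t * J t + g t * J' t) := by
    intro t ht
    have h := hineq t ht
    rw [one_div, inv_mul_le_iff₀ hd] at h
    exact h.trans_eq (by ring)
  have hintegrated := integral_le_sub_add_integral_of_le_sub_deriv
    (f := fun t ↦ (g t * J t) ^ 2) (h := fun t ↦ d * (J t * (g t ^ 2 + g' t))) hT.le hderiv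
    (((hgc.mul hJc).pow 2).intervalIntegrable_of_Icc hT.le)
    ((continuousOn_const.mul (hJc.mul ((hgc.pow 2).add hg'c))).intervalIntegrable_of_Icc hT.le)
    ((continuousOn_const.mul ((hg'c.mul hJc).add (hgc.mul hJ'c))).intervalIntegrable_of_Icc hT.le)
    hpointwise
  have hT_mem : T ∈ Icc 0 T := right_mem_Icc.mpr hT.le
  have hend : 0 ≤ d * (g T * J T) := by
    have hgT := hg T hT_mem
    have hJT := hJ T hT_mem
    positivity
  rw [intervalIntegral.integral_const_mul] at hintegrated
  linarith
end

section
/- Let d > 0, λ > 0, g₀ > 0, J⋆ > 0, T > 0, and let f : [0,T] → ℝ be continuous and nonnegative. Let J : [0,T] → ℝ be differentiable and strictly positive with J(0) = J⋆ and J′(t) ≤ 2f(t)J(t) − (g₀/d)·exp(−∫₀ᵗ (2f(s) − λ) ds)·J(t)² for all t ∈ [0,T]. Then for all t ∈ [0,T], J(t) ≤ exp(2∫₀ᵗ f(s) ds) / (1/J⋆ + (g₀/(λd))·(e^{λt} − 1)). -/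
/-!
With `F(t) = ∫₀ᵗ f`, the substitution `u = exp (2F) / J` linearises the Riccati inequality
`J' ≤ 2f J - b J²` into `u' ≥ b exp (2F)`, and for the schedule at hand
`b exp (2F) = (g₀/d) e^{λt}`. Hence `u - (g₀/(λd)) e^{λt}` is nondecreasing, which gives
`u t ≥ 1/J⋆ + (g₀/(λd)) (e^{λt} - 1) > 0`; inverting this lower bound is the claim.
-/

open MeasureTheory Set

theorem hasDerivAt_integral_of_continuousOn_Icc {E : Type*} [NormedAddCommGroup E]
    [NormedSpace ℝ E] [CompleteSpace E] {f : ℝ → E} {a b x : ℝ}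
    (hf : ContinuousOn f (Icc a b)) (hx : x ∈ Ioo a b) :
    HasDerivAt (fun t => ∫ s in a..t, f s) (f x) x := by
  have hint : IntervalIntegrable f volume a x :=
    (hf.mono (by rw [uIcc_of_le hx.1.le]; exact Icc_subset_Icc_right hx.2.le)).intervalIntegrable
  exact intervalIntegral.integral_hasDerivAt_right hint
    ((hf.mono Ioo_subset_Icc_self).stronglyMeasurableAtFilter isOpen_Ioo x hx)
    (hf.continuousAt (Icc_mem_nhds hx.1 hx.2))

theorem continuousOn_integral_of_continuousOn_Icc {E : Type*} [NormedAddCommGroup E]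
    [NormedSpace ℝ E] {f : ℝ → E} {a b : ℝ} (hab : a ≤ b) (hf : ContinuousOn f (Icc a b)) :
    ContinuousOn (fun t => ∫ s in a..t, f s) (Icc a b) := by
  rw [← uIcc_of_le hab] at hf ⊢
  exact intervalIntegral.continuousOn_primitive_interval (hf.integrableOn_compact isCompact_uIcc)

theorem monotoneOn_exp_div_sub_of_riccati {A a b B J J' : ℝ → ℝ} {x y : ℝ}
    (hAc : ContinuousOn A (Icc x y)) (hA : ∀ s ∈ Ioo x y, HasDerivAt A (a s) s)
    (hBc : ContinuousOn B (Icc x y))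
    (hB : ∀ s ∈ Ioo x y, HasDerivAt B (b s * Real.exp (A s)) s)
    (hJc : ContinuousOn J (Icc x y)) (hJ : ∀ s ∈ Ioo x y, HasDerivAt J (J' s) s)
    (hpos : ∀ s ∈ Icc x y, 0 < J s)
    (hineq : ∀ s ∈ Ioo x y, J' s ≤ a s * J s - b s * J s ^ 2) :
    MonotoneOn (fun s => Real.exp (A s) / J s - B s) (Icc x y) := by
  refine monotoneOn_of_hasDerivWithinAt_nonneg (f' := fun s =>
      Real.exp (A s) * ((a s * J s - J' s) / J s ^ 2 - b s)) (convex_Icc x y)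
    ((hAc.rexp.div hJc fun s hs => (hpos s hs).ne').sub hBc) (fun s hs => ?_) (fun s hs => ?_)
    <;> rw [interior_Icc] at hs
  · have hJs := (hpos s (Ioo_subset_Icc_self hs)).ne'
    refine (((hA s hs).exp.div (hJ s hs) hJs).sub (hB s hs)).hasDerivWithinAt.congr_deriv ?_
    field_simp
  · have hJs := hpos s (Ioo_subset_Icc_self hs)
    have hbJ : b s ≤ (a s * J s - J' s) / J s ^ 2 := by
      rw [le_div_iff₀ (by positivity)]
      linarith [hineq s hs]
    exact mul_nonneg (Real.exp_pos _).le (sub_nonneg.2 hbJ)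

theorem stmt8_general (d lam g₀ Jstar T : ℝ) (hd : 0 < d) (hlam : 0 < lam) (hg₀ : 0 < g₀)
    (hJstar : 0 < Jstar)
    (f : ℝ → ℝ) (hfc : ContinuousOn f (Set.Icc 0 T))
    (J J' : ℝ → ℝ)
    (hderiv : ∀ t ∈ Set.Icc (0:ℝ) T, HasDerivAt J (J' t) t)
    (hpos : ∀ t ∈ Set.Icc (0:ℝ) T, 0 < J t)
    (h0 : J 0 = Jstar)
    (hineq : ∀ t ∈ Set.Icc (0:ℝ) T,
      J' t ≤ 2 * f t * J t -
        (g₀ / d) * Real.exp (-∫ s in (0:ℝ)..t, (2 * f s - lam)) * (J t) ^ 2) :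
    ∀ t ∈ Set.Icc (0:ℝ) T,
      J t ≤ Real.exp (2 * ∫ s in (0:ℝ)..t, f s) /
        (1 / Jstar + (g₀ / (lam * d)) * (Real.exp (lam * t) - 1)) := by
  intro t ht
  have hsub : Icc 0 t ⊆ Icc 0 T := Icc_subset_Icc_right ht.2
  have hft : ContinuousOn f (Icc 0 t) := hfc.mono hsub
  set F : ℝ → ℝ := fun s => ∫ u in (0:ℝ)..s, f u
  have hexponent : ∀ s ∈ Icc 0 t, ∫ u in (0:ℝ)..s, (2 * f u - lam) = 2 * F s - lam * s := by
    intro s hs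
    have hfs : IntervalIntegrable f volume 0 s :=
      (hft.mono (by rw [uIcc_of_le hs.1]; exact Icc_subset_Icc_right hs.2)).intervalIntegrable
    simp [intervalIntegral.integral_sub (hfs.const_mul 2) intervalIntegrable_const, F,
      mul_comm s lam]
  have hB : ∀ s, HasDerivAt (fun s => g₀ / (lam * d) * Real.exp (lam * s))
      (g₀ / d * Real.exp (-(2 * F s - lam * s)) * Real.exp (2 * F s)) s := fun s => by
    refine (((hasDerivAt_id s).const_mul lam).exp.const_mul _).congr_deriv ?_
    rw [mul_assoc, ← Real.exp_add, id, neg_sub, sub_add_cancel]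
    field_simp
  have hmono := monotoneOn_exp_div_sub_of_riccati (A := fun s => 2 * F s) (a := fun s => 2 * f s)
    (b := fun s => g₀ / d * Real.exp (-(2 * F s - lam * s)))
    (B := fun s => g₀ / (lam * d) * Real.exp (lam * s))
    ((continuousOn_integral_of_continuousOn_Icc ht.1 hft).const_mul 2)
    (fun s hs => (hasDerivAt_integral_of_continuousOn_Icc hft hs).const_mul 2)
    (by fun_prop)
    (fun s _ => hB s)
    (fun s hs => (hderiv s (hsub hs)).continuousAt.continuousWithinAt)
    (fun s hs => hderiv s (hsub (Ioo_subset_Icc_self hs)))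
    (fun s hs => hpos s (hsub hs))
    (fun s hs => by
      have := hineq s (hsub (Ioo_subset_Icc_self hs))
      rwa [hexponent s (Ioo_subset_Icc_self hs)] at this)
  have hcomp := hmono (left_mem_Icc.2 ht.1) (right_mem_Icc.2 ht.1) ht.1
  simp only [F, intervalIntegral.integral_same, mul_zero, Real.exp_zero, h0] at hcomp
  have hden : 0 < 1 / Jstar + g₀ / (lam * d) * (Real.exp (lam * t) - 1) := by
    have := Real.one_le_exp (mul_nonneg hlam.le ht.1)
    positivity
  rw [le_div_comm₀ (hpos t ht) hden]
  linarith

/-- Gronwall-type comparison bound for the Fisher information under the approximated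
optimal schedule `g°(t) = g₀ exp(-∫₀ᵗ (2f - λ))`: if
`J' t ≤ 2 f t · J t - (g₀/d) exp(-∫₀ᵗ (2f - λ)) (J t)²` with `J(0) = J⋆ > 0`, then
`J t ≤ exp(2∫₀ᵗ f) / (1/J⋆ + (g₀/(λd))(e^{λt} - 1))`. -/
theorem stmt8 (d lam g₀ Jstar T : ℝ) (hd : 0 < d) (hlam : 0 < lam) (hg₀ : 0 < g₀)
    (hJstar : 0 < Jstar) (hT : 0 < T)
    (f : ℝ → ℝ) (hfc : ContinuousOn f (Set.Icc 0 T))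
    (hf0 : ∀ t ∈ Set.Icc (0:ℝ) T, 0 ≤ f t)
    (J J' : ℝ → ℝ)
    (hderiv : ∀ t ∈ Set.Icc (0:ℝ) T, HasDerivAt J (J' t) t)
    (hpos : ∀ t ∈ Set.Icc (0:ℝ) T, 0 < J t)
    (h0 : J 0 = Jstar)
    (hineq : ∀ t ∈ Set.Icc (0:ℝ) T,
      J' t ≤ 2 * f t * J t -
        (g₀ / d) * Real.exp (-∫ s in (0:ℝ)..t, (2 * f s - lam)) * (J t) ^ 2) :
    ∀ t ∈ Set.Icc (0:ℝ) T,
      J t ≤ Real.exp (2 * ∫ s in (0:ℝ)..t, f s) /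
        (1 / Jstar + (g₀ / (lam * d)) * (Real.exp (lam * t) - 1)) :=
  stmt8_general d lam g₀ Jstar T hd hlam hg₀ hJstar f hfc J J' hderiv hpos h0 hineq
end

section
/- For all λ > 0, d > 0, g₀ > 0, J⋆ > 0 and all t ≥ 0, g₀·e^{λt} / (1/J⋆ + (g₀/(λd))·(e^{λt} − 1)) ≤ max{λd, g₀·J⋆}. -/
/-! With `x = e^{λt}`, `a = 1/J⋆` and `b = g₀/(λd)`, the quantity is `g₀ x / (a + b (x - 1))`.
Its numerator splits as `(g₀/a)·a + (g₀/b)·b(x - 1)`, so it is a mediant of `g₀/a = g₀J⋆` and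
`g₀/b = λd` and cannot exceed the larger of the two. -/

theorem mul_div_add_mul_sub_one_le_max {a b g x : ℝ} (ha : 0 < a) (hb : 0 < b) (hx : 1 ≤ x) :
    g * x / (a + b * (x - 1)) ≤ max (g / a) (g / b) := by
  have hx₁ : 0 ≤ x - 1 := sub_nonneg.2 hx
  have hden : 0 < a + b * (x - 1) := add_pos_of_pos_of_nonneg ha (mul_nonneg hb.le hx₁)
  rw [div_le_iff₀ hden]
  calc g * x = g / a * a + g / b * (b * (x - 1)) := by field_simp; ring
    _ ≤ max (g / a) (g / b) * a + max (g / a) (g / b) * (b * (x - 1)) := by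
      gcongr
      · exact le_max_left _ _
      · exact le_max_right _ _
    _ = max (g / a) (g / b) * (a + b * (x - 1)) := by ring

/-- The product of the approximated optimal schedule with the Fisher information bound
never exceeds `max (λd) (g₀ J⋆)`:
`g₀ e^{λt} / (1/J⋆ + (g₀/(λd))(e^{λt} - 1)) ≤ max (λd) (g₀ J⋆)` for all `t ≥ 0`. -/
theorem stmt9 (lam d g₀ Jstar t : ℝ) (hlam : 0 < lam) (hd : 0 < d) (hg₀ : 0 < g₀)
    (hJstar : 0 < Jstar) (ht : 0 ≤ t) :
    g₀ * Real.exp (lam * t) /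
        (1 / Jstar + (g₀ / (lam * d)) * (Real.exp (lam * t) - 1))
      ≤ max (lam * d) (g₀ * Jstar) := by
  have hexp : 1 ≤ Real.exp (lam * t) := Real.one_le_exp (mul_nonneg hlam.le ht)
  have hbound := mul_div_add_mul_sub_one_le_max (g := g₀) (one_div_pos.2 hJstar)
    (div_pos hg₀ (mul_pos hlam hd)) hexp
  rwa [div_div_eq_mul_div, div_one, div_div_cancel₀ hg₀.ne', max_comm] at hbound
end

section
/- Let d ≥ 1 and let p : ℝ^d → (0,∞) be a twice continuously differentiable probability density such that ∫ ‖∇ log p(x)‖² p(x) dx and ∫ ‖∇² log p(x)‖_F² p(x) dx are finite and the integration-by-parts identity ∫ ‖∇ log p(x)‖² p(x) dx = −∫ tr(∇² log p(x)) p(x) dx holds. Then (∫ ‖∇ log p(x)‖² p(x) dx)² ≤ d · ∫ ‖∇² log p(x)‖_F² p(x) dx. -/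
/-!
Write `T = tr ∇s` and `F = ‖∇s‖_F²`. By integration by parts the Fisher information is `-∫ T p`.
Jensen's inequality for the probability density `p` gives `(∫ T p)² ≤ ∫ T² p`, and Cauchy–Schwarz
for the `d` diagonal entries of `∇s` gives `T² ≤ d F` pointwise.
-/

open MeasureTheory

theorem sq_sum_inner_le_card_mul_sum_norm_sq {ι E : Type*} [Fintype ι] [NormedAddCommGroup E]
    [InnerProductSpace ℝ E] (u v : ι → E) (hv : ∀ i, ‖v i‖ ≤ 1) :
    (∑ i, inner ℝ (u i) (v i)) ^ 2 ≤ Fintype.card ι * ∑ i, ‖u i‖ ^ 2 := by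
  refine sq_sum_le_card_mul_sum_sq.trans (mul_le_mul_of_nonneg_left ?_ (Nat.cast_nonneg _))
  refine Finset.sum_le_sum fun i _ => ?_
  have h : |inner ℝ (u i) (v i)| ≤ ‖u i‖ :=
    (abs_real_inner_le_norm _ _).trans
      (mul_le_of_le_one_right (norm_nonneg _) (hv i))
  simpa only [sq_abs] using pow_le_pow_left₀ (abs_nonneg _) h 2

section WeightedIntegral

variable {α : Type*} [MeasurableSpace α] {μ : Measure α} {f p : α → ℝ}

theorem integrable_mul_of_integrable_sq_mul (hp : 0 ≤ᵐ[μ] p) (hp_int : Integrable p μ)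
    (hf : AEStronglyMeasurable f μ) (hf2 : Integrable (fun x => f x ^ 2 * p x) μ) :
    Integrable (fun x => f x * p x) μ := by
  refine ((hf2.add hp_int).div_const 2).mono' (hf.mul hp_int.aestronglyMeasurable) ?_
  filter_upwards [hp] with x hx
  have h : |f x| ≤ (f x ^ 2 + 1) / 2 := by nlinarith [sq_abs (f x), sq_nonneg (|f x| - 1)]
  calc ‖f x * p x‖ = |f x| * p x := by rw [norm_mul, Real.norm_eq_abs, Real.norm_of_nonneg hx]
    _ ≤ (f x ^ 2 + 1) / 2 * p x := mul_le_mul_of_nonneg_right h hx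
    _ = (f x ^ 2 * p x + p x) / 2 := by ring

theorem sq_integral_mul_le_integral_sq_mul (hp : 0 ≤ᵐ[μ] p) (hp_int : Integrable p μ)
    (hp_one : ∫ x, p x ∂μ = 1) (hf : AEStronglyMeasurable f μ)
    (hf2 : Integrable (fun x => f x ^ 2 * p x) μ) :
    (∫ x, f x * p x ∂μ) ^ 2 ≤ ∫ x, f x ^ 2 * p x ∂μ := by
  set m := ∫ x, f x * p x ∂μ
  have hfp := integrable_mul_of_integrable_sq_mul hp hp_int hf hf2
  -- `2 m f p ≤ f² p + m² p` is `0 ≤ (f - m)² p`; integrating gives `2 m² ≤ ∫ f² p + m²`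
  have h : ∫ x, 2 * m * (f x * p x) ∂μ ≤ ∫ x, f x ^ 2 * p x + m ^ 2 * p x ∂μ := by
    refine integral_mono_ae (hfp.const_mul _) (hf2.add (hp_int.const_mul _)) ?_
    filter_upwards [hp] with x hx
    nlinarith [mul_nonneg (sq_nonneg (f x - m)) hx]
  rw [integral_const_mul, integral_add hf2 (hp_int.const_mul _), integral_const_mul,
    hp_one] at h
  nlinarith

end WeightedIntegral

theorem stmt10_general (d : ℕ)
    (p : EuclideanSpace ℝ (Fin d) → ℝ)
    (hp_pos : ∀ x, 0 < p x)
    (hp_int : Integrable p)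
    (hp_prob : ∫ x, p x = 1)
    (s : EuclideanSpace ℝ (Fin d) → EuclideanSpace ℝ (Fin d))
    (hint2 : Integrable (fun x =>
      (∑ i, ‖fderiv ℝ s x (EuclideanSpace.single i 1)‖ ^ 2) * p x))
    (hibp : ∫ x, ‖s x‖ ^ 2 * p x =
      - ∫ x, (∑ i, (inner ℝ (fderiv ℝ s x (EuclideanSpace.single i 1))
          (EuclideanSpace.single i 1) : ℝ)) * p x) :
    (∫ x, ‖s x‖ ^ 2 * p x) ^ 2 ≤
      d * ∫ x, (∑ i, ‖fderiv ℝ s x (EuclideanSpace.single i 1)‖ ^ 2) * p x := by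
  set T := fun x => ∑ i, (inner ℝ (fderiv ℝ s x (EuclideanSpace.single i 1))
    (EuclideanSpace.single i 1) : ℝ)
  set F := fun x => ∑ i, ‖fderiv ℝ s x (EuclideanSpace.single i 1)‖ ^ 2
  have hp : 0 ≤ᵐ[volume] p := Filter.Eventually.of_forall fun x => (hp_pos x).le
  have hT2_le : ∀ x, T x ^ 2 * p x ≤ d * (F x * p x) := fun x => by
    rw [← mul_assoc]
    refine mul_le_mul_of_nonneg_right ?_ (hp_pos x).le
    simpa using sq_sum_inner_le_card_mul_sum_norm_sq (fun i => fderiv ℝ s x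
      (EuclideanSpace.single i 1)) (fun i => EuclideanSpace.single i (1 : ℝ)) (fun i => by simp)
  have hT : AEStronglyMeasurable T := by fun_prop
  have hT2 : Integrable (fun x => T x ^ 2 * p x) :=
    (hint2.const_mul d).mono' ((hT.pow 2).mul hp_int.aestronglyMeasurable)
      (.of_forall fun x => by
        rw [Real.norm_of_nonneg (mul_nonneg (sq_nonneg _) (hp_pos x).le)]
        exact hT2_le x)
  calc (∫ x, ‖s x‖ ^ 2 * p x) ^ 2 = (∫ x, T x * p x) ^ 2 := by rw [hibp, neg_sq]
    _ ≤ ∫ x, T x ^ 2 * p x := sq_integral_mul_le_integral_sq_mul hp hp_int hp_prob hT hT2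
    _ ≤ d * ∫ x, F x * p x := by
      rw [← integral_const_mul]
      exact integral_mono hT2 (hint2.const_mul _) hT2_le

/-- Concavity-of-entropy-power bound: for a smooth positive probability density `p` on
`ℝ^d` with score `s = ∇ log p`, under integrability and the integration-by-parts identity
`∫ ‖s‖² p = -∫ tr(∇s) p`, one has `(∫ ‖s‖² p)² ≤ d ∫ ‖∇s‖_F² p`, where
`‖∇s‖_F² = ∑ᵢ ‖(∇s) eᵢ‖²` is the squared Frobenius norm of the Hessian of `log p`. -/
theorem stmt10 (d : ℕ) (hd : 1 ≤ d)
    (p : EuclideanSpace ℝ (Fin d) → ℝ)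
    (hp_pos : ∀ x, 0 < p x)
    (hp_smooth : ContDiff ℝ 2 p)
    (hp_int : Integrable p)
    (hp_prob : ∫ x, p x = 1)
    (s : EuclideanSpace ℝ (Fin d) → EuclideanSpace ℝ (Fin d))
    (hs : ∀ x, s x = gradient (fun y => Real.log (p y)) x)
    (hint1 : Integrable (fun x => ‖s x‖ ^ 2 * p x))
    (hint2 : Integrable (fun x =>
      (∑ i, ‖fderiv ℝ s x (EuclideanSpace.single i 1)‖ ^ 2) * p x))
    (hibp : ∫ x, ‖s x‖ ^ 2 * p x =
      - ∫ x, (∑ i, (inner ℝ (fderiv ℝ s x (EuclideanSpace.single i 1))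
          (EuclideanSpace.single i 1) : ℝ)) * p x) :
    (∫ x, ‖s x‖ ^ 2 * p x) ^ 2 ≤
      d * ∫ x, (∑ i, ‖fderiv ℝ s x (EuclideanSpace.single i 1)‖ ^ 2) * p x :=
  stmt10_general d p hp_pos hp_int hp_prob s hint2 hibp
end
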